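/- arXiv:2506.17012 — 7 statements merged into one kernel-verified Lean document; each statement's English description precedes it below -/
import Mathlib

section
/- The alpha divergence is monotone under restriction to a sub-σ-algebra: if P ≪ Q are probability measures on (X, F) and G ⊆ F is a sub-σ-algebra, then D̃_α(P|_G ‖ Q|_G) ≤ D̃_α(P ‖ Q) for all α > 1 (data processing inequality / preservation under post-processing). -/
open MeasureTheory Set
open scoped ENNReal

/-! Since `d(P|_G)/d(Q|_G) = E_Q[dP/dQ | G]`, the inequality is the integrated conditional Jensen
inequality for the convex function `t ↦ t ^ α`. If `∫ (dP/dQ)^α dQ = ∞` there is nothing to prove;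
otherwise all the integrals involved are finite and can be compared as real integrals. -/

section

variable {X : Type*} {m m0 : MeasurableSpace X}

theorem integrable_toReal_rpow_of_lintegral_ne_top {μ : Measure[m0] X} {f : X → ℝ≥0∞} {p : ℝ}
    (hf : AEMeasurable f μ) (hfp : ∫⁻ x, f x ^ p ∂μ ≠ ∞) :
    Integrable (fun x ↦ (f x).toReal ^ p) μ := by
  simpa only [ENNReal.toReal_rpow] using
    integrable_toReal_of_lintegral_ne_top (hf.pow_const p) hfp

theorem lintegral_rpow_eq_ofReal_integral {μ : Measure[m0] X} {f : X → ℝ≥0∞} {p : ℝ}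
    (hp : 0 ≤ p) (hf : ∀ᵐ x ∂μ, f x ≠ ∞) (hfp : Integrable (fun x ↦ (f x).toReal ^ p) μ) :
    ∫⁻ x, f x ^ p ∂μ = ENNReal.ofReal (∫ x, (f x).toReal ^ p ∂μ) := by
  rw [ofReal_integral_eq_lintegral_ofReal hfp (ae_of_all _ fun x ↦ by positivity)]
  refine lintegral_congr_ae ?_
  filter_upwards [hf] with x hx
  rw [← ENNReal.ofReal_rpow_of_nonneg ENNReal.toReal_nonneg hp, ENNReal.ofReal_toReal hx]

variable {μ ν : Measure[m0] X} [IsFiniteMeasure μ] [IsFiniteMeasure ν]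

theorem ConvexOn.integral_comp_rnDeriv_trim_le {φ : ℝ → ℝ} (hm : m ≤ m0) (hμν : μ ≪ ν)
    (hφ : StronglyMeasurable φ) (hφ_cvx : ConvexOn ℝ (Ici 0) φ)
    (hφ_cont : ContinuousWithinAt φ (Ici 0) 0)
    (h_int : Integrable (fun x ↦ φ (μ.rnDeriv ν x).toReal) ν) :
    ∫ x, φ ((μ.trim hm).rnDeriv (ν.trim hm) x).toReal ∂(ν.trim hm)
      ≤ ∫ x, φ (μ.rnDeriv ν x).toReal ∂ν :=
  calc _ ≤ ∫ x, (ν[fun x ↦ φ (μ.rnDeriv ν x).toReal | m]) x ∂(ν.trim hm) :=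
        integral_mono_ae (hφ_cvx.integrable_comp_rnDeriv_trim hm hμν hφ hφ_cont h_int)
          (integrable_condExp.trim hm stronglyMeasurable_condExp)
          (hφ_cvx.comp_rnDeriv_trim_le hm hμν hφ hφ_cont h_int)
    _ = ∫ x, φ (μ.rnDeriv ν x).toReal ∂ν := by
        rw [← integral_trim hm stronglyMeasurable_condExp, integral_condExp hm]

theorem lintegral_rnDeriv_trim_rpow_le (hm : m ≤ m0) (hμν : μ ≪ ν) {p : ℝ} (hp : 1 ≤ p) :
    ∫⁻ x, (μ.trim hm).rnDeriv (ν.trim hm) x ^ p ∂(ν.trim hm) ≤ ∫⁻ x, μ.rnDeriv ν x ^ p ∂ν := by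
  by_cases h_top : ∫⁻ x, μ.rnDeriv ν x ^ p ∂ν = ∞
  · simp [h_top]
  have hp0 : 0 ≤ p := zero_le_one.trans hp
  have hφ : StronglyMeasurable fun t : ℝ ↦ t ^ p :=
    (Real.continuous_rpow_const hp0).stronglyMeasurable
  have hφ_cont : ContinuousWithinAt (fun t : ℝ ↦ t ^ p) (Ici 0) 0 :=
    (Real.continuous_rpow_const hp0).continuousWithinAt
  have h_int := integrable_toReal_rpow_of_lintegral_ne_top
    (Measure.measurable_rnDeriv μ ν).aemeasurable h_top
  rw [lintegral_rpow_eq_ofReal_integral hp0 (Measure.rnDeriv_ne_top _ _) h_int,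
    lintegral_rpow_eq_ofReal_integral hp0 (Measure.rnDeriv_ne_top _ _)
      ((convexOn_rpow hp).integrable_comp_rnDeriv_trim hm hμν hφ hφ_cont h_int)]
  exact ENNReal.ofReal_le_ofReal
    ((convexOn_rpow hp).integral_comp_rnDeriv_trim_le hm hμν hφ hφ_cont h_int)

end

/-- Data processing inequality for the alpha divergence
`D̃_α(P‖Q) = (∫ (dP/dQ)^α dQ − 1)/(α(α−1))`: restricting probability measures `P ≪ Q` to a
sub-σ-algebra `m ≤ m0` does not increase the alpha divergence, for every `α > 1`. -/
theorem alphaDivergence_trim_le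
    {X : Type*} {m0 : MeasurableSpace X} (m : MeasurableSpace X) (hm : m ≤ m0)
    (P Q : @Measure X m0)
    [IsProbabilityMeasure P] [IsProbabilityMeasure Q]
    (hPQ : P ≪ Q) (α : ℝ) (hα : 1 < α) :
    ((∫⁻ x, ((P.trim hm).rnDeriv (Q.trim hm) x) ^ α ∂(Q.trim hm)) - 1)
        / ENNReal.ofReal (α * (α - 1))
      ≤ ((∫⁻ x, (P.rnDeriv Q x) ^ α ∂Q) - 1) / ENNReal.ofReal (α * (α - 1)) := by
  gcongr
  exact lintegral_rnDeriv_trim_rpow_le hm hPQ hα.le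
end

section
/- Adaptive sequential composition for alpha differential privacy: if mechanism M₁ is (α, ε₁)-ADP and M₂ (which may depend on the output of M₁) is (α, ε₂)-ADP, then the composed mechanism (X, Y) with X ~ M₁(D) and Y ~ M₂(X, D) satisfies (α, ε₁ + ε₂ + α(α−1)ε₁ε₂)-ADP. -/
/-!
Let `h = d(μ ⊗ κ)/d(ν ⊗ κ')` and let `q` be the Hölder conjugate of `α`. Then
`∫ h^α d(ν ⊗ κ') = ∫ h^(α-1) d(μ ⊗ κ)`, and changing measure from `κ x` to `κ' x` in each fibre
and then from `μ` to `ν`, each time by Hölder's inequality, bounds this by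
`(C₁ C₂)^(1/α) (∫ h^α d(ν ⊗ κ'))^(1/q)`, where `C₁, C₂` bound the two `α`-moments of the
densities. Cancelling gives `∫ h^α d(ν ⊗ κ') ≤ C₁ C₂`; the integral is made finite for the
cancellation by truncating `h`. This route never identifies `h` with the product of the two
densities, which would need a jointly measurable choice of the fibrewise densities.
-/

open MeasureTheory ProbabilityTheory
open scoped ENNReal

namespace ENNReal

lemma iSup_min_natCast_rpow {p : ℝ} (hp : 0 ≤ p) (x : ℝ≥0∞) :
    ⨆ n : ℕ, min x n ^ p = x ^ p := by
  have hsup : ⨆ n : ℕ, min x n = x := by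
    rw [← inf_iSup_eq, iSup_natCast, inf_top_eq]
  conv_rhs => rw [← hsup]
  exact ((monotone_rpow_of_nonneg hp).map_ciSup_of_continuousAt
    continuous_rpow_const.continuousAt).symm

lemma le_of_le_rpow_mul_rpow {p q : ℝ} (hpq : p.HolderConjugate q) {x y : ℝ≥0∞}
    (hx : x ≠ ∞) (h : x ≤ y ^ (1 / p) * x ^ (1 / q)) : x ≤ y := by
  rcases eq_or_ne x 0 with rfl | hx₀
  · exact bot_le
  have hq : 0 < 1 / q := one_div_pos.2 hpq.symm.pos
  have hsplit : x = x ^ (1 / p) * x ^ (1 / q) := by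
    rw [← rpow_add _ _ hx₀ hx, one_div, one_div, hpq.inv_add_inv_eq_one, rpow_one]
  nth_rewrite 1 [hsplit] at h
  have h' : x ^ (1 / p) ≤ y ^ (1 / p) :=
    (ENNReal.mul_le_mul_iff_left (rpow_pos (pos_iff_ne_zero.2 hx₀) hx).ne'
      (rpow_ne_top_of_nonneg hq.le hx)).1 h
  exact (rpow_le_rpow_iff (one_div_pos.2 hpq.pos)).1 h'

end ENNReal

section

variable {α β : Type*} [MeasurableSpace α] [MeasurableSpace β] {μ ν : Measure α}
  {κ κ' : Kernel α β} {p q : ℝ} {C₁ C₂ : ℝ≥0∞}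

theorem lintegral_le_rnDeriv_Lp_mul_Lq [μ.HaveLebesgueDecomposition ν]
    (hpq : p.HolderConjugate q) (hμν : μ ≪ ν) {f : α → ℝ≥0∞} (hf : AEMeasurable f ν) :
    ∫⁻ x, f x ∂μ ≤ (∫⁻ x, μ.rnDeriv ν x ^ p ∂ν) ^ (1 / p) * (∫⁻ x, f x ^ q ∂ν) ^ (1 / q) := by
  rw [← lintegral_rnDeriv_mul hμν hf]
  exact ENNReal.lintegral_mul_le_Lp_mul_Lq ν hpq (Measure.measurable_rnDeriv μ ν).aemeasurable hf


theorem lintegral_compProd_le_rnDeriv_Lp_mul_Lq [SFinite μ] [SigmaFinite ν]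
    [IsSFiniteKernel κ] [IsFiniteKernel κ']
    (hpq : p.HolderConjugate q) (hμν : μ ≪ ν) (hκ : ∀ᵐ x ∂μ, κ x ≪ κ' x)
    (h₁ : ∫⁻ x, μ.rnDeriv ν x ^ p ∂ν ≤ C₁)
    (h₂ : ∀ᵐ x ∂μ, ∫⁻ y, (κ x).rnDeriv (κ' x) y ^ p ∂(κ' x) ≤ C₂)
    {φ : α × β → ℝ≥0∞} (hφ : Measurable φ) :
    ∫⁻ z, φ z ∂(μ ⊗ₘ κ) ≤ (C₁ * C₂) ^ (1 / p) * (∫⁻ z, φ z ^ q ∂(ν ⊗ₘ κ')) ^ (1 / q) := by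
  have hp : 0 ≤ 1 / p := one_div_nonneg.2 hpq.nonneg
  have hq : 0 ≤ 1 / q := one_div_nonneg.2 hpq.symm.nonneg
  set ψ : α → ℝ≥0∞ := fun x => ∫⁻ y, φ (x, y) ^ q ∂(κ' x)
  have hψ : Measurable ψ := (hφ.pow_const q).lintegral_kernel_prod_right'
  have fiber : ∀ᵐ x ∂μ, ∫⁻ y, φ (x, y) ∂(κ x) ≤ C₂ ^ (1 / p) * ψ x ^ (1 / q) := by
    filter_upwards [hκ, h₂] with x hκx h₂x
    calc _ ≤ _ := lintegral_le_rnDeriv_Lp_mul_Lq (f := fun y => φ (x, y)) hpq hκx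
          (hφ.comp measurable_prodMk_left).aemeasurable
      _ ≤ _ := by gcongr
  have base : ∫⁻ x, ψ x ^ (1 / q) ∂μ ≤ C₁ ^ (1 / p) * (∫⁻ x, ψ x ∂ν) ^ (1 / q) := by
    calc _ ≤ _ := lintegral_le_rnDeriv_Lp_mul_Lq (f := fun x => ψ x ^ (1 / q)) hpq hμν
          (hψ.pow_const _).aemeasurable
      _ ≤ _ := by
        simp_rw [← ENNReal.rpow_mul, one_div_mul_cancel hpq.symm.ne_zero, ENNReal.rpow_one]
        gcongr
  calc ∫⁻ z, φ z ∂(μ ⊗ₘ κ) = ∫⁻ x, ∫⁻ y, φ (x, y) ∂(κ x) ∂μ := Measure.lintegral_compProd hφ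
    _ ≤ ∫⁻ x, C₂ ^ (1 / p) * ψ x ^ (1 / q) ∂μ := lintegral_mono_ae fiber
    _ = C₂ ^ (1 / p) * ∫⁻ x, ψ x ^ (1 / q) ∂μ := lintegral_const_mul _ (hψ.pow_const _)
    _ ≤ C₂ ^ (1 / p) * (C₁ ^ (1 / p) * (∫⁻ x, ψ x ∂ν) ^ (1 / q)) := by gcongr
    _ = (C₁ * C₂) ^ (1 / p) * (∫⁻ z, φ z ^ q ∂(ν ⊗ₘ κ')) ^ (1 / q) := by
        rw [Measure.lintegral_compProd (hφ.pow_const q), ENNReal.mul_rpow_of_nonneg _ _ hp]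
        ring

theorem lintegral_rnDeriv_compProd_rpow_le [SFinite μ] [IsFiniteMeasure ν]
    [IsSFiniteKernel κ] [IsFiniteKernel κ'] (hp : 1 < p)
    (hμν : μ ≪ ν) (hκ : ∀ᵐ x ∂μ, κ x ≪ κ' x)
    (h₁ : ∫⁻ x, μ.rnDeriv ν x ^ p ∂ν ≤ C₁)
    (h₂ : ∀ᵐ x ∂μ, ∫⁻ y, (κ x).rnDeriv (κ' x) y ^ p ∂(κ' x) ≤ C₂) :
    ∫⁻ z, (μ ⊗ₘ κ).rnDeriv (ν ⊗ₘ κ') z ^ p ∂(ν ⊗ₘ κ') ≤ C₁ * C₂ := by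
  have hpq := Real.HolderConjugate.conjExponent hp
  set q := p.conjExponent
  have hp₀ : 0 ≤ p := hpq.nonneg
  set h := (μ ⊗ₘ κ).rnDeriv (ν ⊗ₘ κ')
  have hh : Measurable h := Measure.measurable_rnDeriv _ _
  have truncated (n : ℕ) : ∫⁻ z, min (h z) n ^ p ∂(ν ⊗ₘ κ') ≤ C₁ * C₂ := by
    set g := fun z => min (h z) n
    have hg : Measurable g := hh.min measurable_const
    have hfin : ∫⁻ z, g z ^ p ∂(ν ⊗ₘ κ') ≠ ∞ := by
      refine ne_top_of_le_ne_top ?_ (lintegral_mono fun z =>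
        ENNReal.rpow_le_rpow (min_le_right (h z) n) hp₀)
      rw [lintegral_const]
      exact ENNReal.mul_ne_top (ENNReal.rpow_ne_top_of_nonneg hp₀ (ENNReal.natCast_ne_top n))
        (measure_ne_top _ _)
    refine ENNReal.le_of_le_rpow_mul_rpow hpq hfin ?_
    calc ∫⁻ z, g z ^ p ∂(ν ⊗ₘ κ') ≤ ∫⁻ z, h z * g z ^ (p - 1) ∂(ν ⊗ₘ κ') := by
          refine lintegral_mono fun z => ?_
          calc g z ^ p = g z ^ ((1 : ℝ) + (p - 1)) := by rw [add_sub_cancel]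
            _ = g z * g z ^ (p - 1) := by
                rw [ENNReal.rpow_add_of_nonneg _ _ zero_le_one hpq.sub_one_pos.le, ENNReal.rpow_one]
            _ ≤ h z * g z ^ (p - 1) := by gcongr; exact min_le_left _ _
      _ = ∫⁻ z, g z ^ (p - 1) ∂(μ ⊗ₘ κ) :=
          lintegral_rnDeriv_mul (hμν.compProd hκ) (hg.pow_const _).aemeasurable
      _ ≤ (C₁ * C₂) ^ (1 / p) * (∫⁻ z, (g z ^ (p - 1)) ^ q ∂(ν ⊗ₘ κ')) ^ (1 / q) :=
          lintegral_compProd_le_rnDeriv_Lp_mul_Lq hpq hμν hκ h₁ h₂ (hg.pow_const _)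
      _ = (C₁ * C₂) ^ (1 / p) * (∫⁻ z, g z ^ p ∂(ν ⊗ₘ κ')) ^ (1 / q) := by
          simp_rw [← ENNReal.rpow_mul, hpq.sub_one_mul_conj]
  calc ∫⁻ z, h z ^ p ∂(ν ⊗ₘ κ') = ∫⁻ z, ⨆ n : ℕ, min (h z) n ^ p ∂(ν ⊗ₘ κ') := by
        simp_rw [ENNReal.iSup_min_natCast_rpow hp₀]
    _ = ⨆ n : ℕ, ∫⁻ z, min (h z) n ^ p ∂(ν ⊗ₘ κ') :=
        lintegral_iSup (fun n => (hh.min measurable_const).pow_const _)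
          fun m n hmn z => ENNReal.rpow_le_rpow (min_le_min_left _ (Nat.cast_le.2 hmn)) hp₀
    _ ≤ C₁ * C₂ := iSup_le truncated

end

/-- Adaptive sequential composition for alpha differential privacy.
If the first mechanism's output laws `μ, ν` (on adjacent datasets) satisfy `(α, ε₁)`-ADP,
i.e. `∫ (dμ/dν)^α dν ≤ α(α−1)ε₁ + 1`, and the second (adaptive) mechanism, modelled as
Markov kernels `κ, κ'`, satisfies `(α, ε₂)`-ADP for every first-stage output `x`, then the
joint law `μ ⊗ₘ κ` versus `ν ⊗ₘ κ'` satisfies `(α, ε₁ + ε₂ + α(α−1)ε₁ε₂)`-ADP, where the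
alpha divergence is `D̃_α(P‖Q) = (∫ (dP/dQ)^α dQ − 1)/(α(α−1))`. -/
theorem adaptive_composition_ADP
    {A B : Type*} [MeasurableSpace A] [MeasurableSpace B]
    (μ ν : Measure A) [IsProbabilityMeasure μ] [IsProbabilityMeasure ν]
    (κ κ' : Kernel A B) [IsMarkovKernel κ] [IsMarkovKernel κ']
    (α ε₁ ε₂ : ℝ) (hα : 1 < α) (hε₁ : 0 ≤ ε₁) (hε₂ : 0 ≤ ε₂)
    (hμν : μ ≪ ν) (hκ : ∀ x, κ x ≪ κ' x)
    (h₁ : ∫⁻ x, (μ.rnDeriv ν x) ^ α ∂ν ≤ ENNReal.ofReal (α * (α - 1) * ε₁ + 1))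
    (h₂ : ∀ x, ∫⁻ y, ((κ x).rnDeriv (κ' x) y) ^ α ∂(κ' x)
        ≤ ENNReal.ofReal (α * (α - 1) * ε₂ + 1)) :
    ((∫⁻ z, ((μ ⊗ₘ κ).rnDeriv (ν ⊗ₘ κ') z) ^ α ∂(ν ⊗ₘ κ')) - 1)
        / ENNReal.ofReal (α * (α - 1))
      ≤ ENNReal.ofReal (ε₁ + ε₂ + α * (α - 1) * ε₁ * ε₂) := by
  set a := α * (α - 1)
  have ha : 0 < a := mul_pos (by linarith) (by linarith)
  have hε : 0 ≤ ε₁ + ε₂ + a * ε₁ * ε₂ := by positivity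
  have hprod : ENNReal.ofReal (a * ε₁ + 1) * ENNReal.ofReal (a * ε₂ + 1)
      = ENNReal.ofReal ((ε₁ + ε₂ + a * ε₁ * ε₂) * a) + 1 := by
    rw [← ENNReal.ofReal_mul (by positivity), ← ENNReal.ofReal_one,
      ← ENNReal.ofReal_add (by positivity) zero_le_one]
    ring_nf
  refine ENNReal.div_le_of_le_mul ?_
  rw [← ENNReal.ofReal_mul hε, tsub_le_iff_right, ← hprod]
  exact lintegral_rnDeriv_compProd_rpow_le hα hμν (.of_forall hκ) h₁ (.of_forall h₂)
end

section
/- Triangle-type inequality for the alpha-divergence moment functional: for probability measures P ≪ Q and an intermediate probability measure R with λ ≪ P ≪ Q ≪ R ≪ λ, defining I_α(A‖B) = ∫ (dA/dB)^α dB, one has I_α(P‖Q) ≤ I_{2α}(P‖R)^{1/2} · I_{2α−1}(R‖Q)^{1/2} for all α > 1. -/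
/-!
Write `dP/dQ = (dP/dR)(dR/dQ)` and split `(dP/dQ)^α` as
`((dP/dR)^α (dR/dQ)^{1/2}) · (dR/dQ)^{α-1/2}`. Cauchy–Schwarz in `L²(Q)` bounds its integral by the
product of the `L²` norms of the two factors; the density `dR/dQ` in the square of the first one
turns integration against `Q` into integration against `R`, giving `I_{2α}(P‖R)`, and the square
of the second one is `(dR/dQ)^{2α-1}`, whose integral is `I_{2α-1}(R‖Q)`.
-/

open MeasureTheory
open scoped ENNReal

namespace ENNReal

lemma mul_rpow_eq_rpow_mul_sqrt_mul_rpow_sub_half (a b : ℝ≥0∞) {α : ℝ} (hα : 1 / 2 ≤ α) :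
    (a * b) ^ α = a ^ α * b ^ (1 / 2 : ℝ) * b ^ (α - 1 / 2) := by
  rw [mul_rpow_of_nonneg _ _ (by linarith), mul_assoc,
    ← rpow_add_of_nonneg _ _ (by norm_num) (by linarith)]
  norm_num

lemma rpow_mul_sqrt_sq (a b : ℝ≥0∞) (α : ℝ) :
    (a ^ α * b ^ (1 / 2 : ℝ)) ^ (2 : ℝ) = b * a ^ (2 * α) := by
  rw [mul_rpow_of_nonneg _ _ (by norm_num), ← rpow_mul, ← rpow_mul, mul_comm α]
  norm_num [mul_comm]

lemma rpow_sub_half_sq (b : ℝ≥0∞) (α : ℝ) : (b ^ (α - 1 / 2)) ^ (2 : ℝ) = b ^ (2 * α - 1) := by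
  rw [← rpow_mul]
  ring_nf

end ENNReal

namespace MeasureTheory.Measure

variable {X : Type*} [MeasurableSpace X]

/-- The paper's `I_α(μ‖ν)`. -/
noncomputable def rnDerivMoment (α : ℝ) (μ ν : Measure X) : ℝ≥0∞ :=
  ∫⁻ x, μ.rnDeriv ν x ^ α ∂ν

theorem rnDerivMoment_le_sqrt_mul_sqrt {μ ν ρ : Measure X} [SigmaFinite μ] [SigmaFinite ν]
    [SigmaFinite ρ] (hμρ : μ ≪ ρ) (hρν : ρ ≪ ν) {α : ℝ} (hα : 1 / 2 ≤ α) :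
    rnDerivMoment α μ ν
      ≤ rnDerivMoment (2 * α) μ ρ ^ (1 / 2 : ℝ) * rnDerivMoment (2 * α - 1) ρ ν ^ (1 / 2 : ℝ) := by
  set a := μ.rnDeriv ρ
  set b := ρ.rnDeriv ν
  have ha : Measurable a := measurable_rnDeriv μ ρ
  have hb : Measurable b := measurable_rnDeriv ρ ν
  let f : X → ℝ≥0∞ := fun x ↦ a x ^ α * b x ^ (1 / 2 : ℝ)
  let g : X → ℝ≥0∞ := fun x ↦ b x ^ (α - 1 / 2)
  have h_split : rnDerivMoment α μ ν = ∫⁻ x, (f * g) x ∂ν := by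
    refine lintegral_congr_ae ?_
    filter_upwards [rnDeriv_mul_rnDeriv hμρ] with x hx
    rw [← hx, Pi.mul_apply, ENNReal.mul_rpow_eq_rpow_mul_sqrt_mul_rpow_sub_half _ _ hα]
    rfl
  have hf_sq : ∫⁻ x, f x ^ (2 : ℝ) ∂ν = rnDerivMoment (2 * α) μ ρ := by
    simp_rw [f, ENNReal.rpow_mul_sqrt_sq]
    exact lintegral_rnDeriv_mul hρν (ha.pow_const _).aemeasurable
  have hg_sq : ∫⁻ x, g x ^ (2 : ℝ) ∂ν = rnDerivMoment (2 * α - 1) ρ ν := by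
    simp_rw [g, ENNReal.rpow_sub_half_sq]
    rfl
  rw [h_split, ← hf_sq, ← hg_sq]
  exact ENNReal.lintegral_mul_le_Lp_mul_Lq ν .two_two
    ((ha.pow_const _).mul (hb.pow_const _)).aemeasurable (hb.pow_const _).aemeasurable

end MeasureTheory.Measure

/-- Triangle-type inequality for the alpha-divergence moment functional
`I_α(A‖B) = ∫ (dA/dB)^α dB`: for probability measures with `λ ≪ P ≪ Q ≪ R ≪ λ`
(`λ` the Lebesgue measure on the ambient space) and `α > 1`,
`I_α(P‖Q) ≤ I_{2α}(P‖R)^{1/2} · I_{2α−1}(R‖Q)^{1/2}`. -/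
theorem alpha_moment_triangle
    {X : Type*} [MeasureSpace X] (P Q R : Measure X)
    [IsProbabilityMeasure P] [IsProbabilityMeasure Q] [IsProbabilityMeasure R]
    (hlamP : (volume : Measure X) ≪ P) (hPQ : P ≪ Q) (hQR : Q ≪ R)
    (hRlam : R ≪ (volume : Measure X))
    (α : ℝ) (hα : 1 < α) :
    ∫⁻ x, (P.rnDeriv Q x) ^ α ∂Q
      ≤ (∫⁻ x, (P.rnDeriv R x) ^ (2 * α) ∂ R) ^ ((1 : ℝ) / 2)
        * (∫⁻ x, (R.rnDeriv Q x) ^ (2 * α - 1) ∂Q) ^ ((1 : ℝ) / 2) :=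
  Measure.rnDerivMoment_le_sqrt_mul_sqrt (hPQ.trans hQR) (hRlam.trans (hlamP.trans hPQ))
    (by linarith)
end

section
/- Group privacy step for ADP: if for all adjacent dataset pairs the mechanism M satisfies D̃_α(M(D₁)‖M(D₂)) ≤ ε with α > 2, then for datasets D₁, D₃ differing in at most 2 entries (connected through an intermediate dataset D₂), one has D̃_{α/2}(M(D₁)‖M(D₃)) ≤ [α(α−1) / ((α/2)(α/2 − 1))]·ε, under the absolute continuity chain λ ≪ P ≪ Q ≪ R ≪ λ for the induced output measures. -/
open MeasureTheory
open scoped ENNReal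

/-! Write `dP/dQ = f g` with `f = dP/dR`, `g = dR/dQ`. Cauchy–Schwarz splits
`∫ (f g)^{α/2} dQ` into `(∫ f^α g dQ)^{1/2} (∫ g^{α-1} dQ)^{1/2}`; the first factor is at most
`(∫ f^α dR)^{1/2}`, and Lyapunov's inequality bounds the second by `(∫ g^α dQ)^{(α-1)/(2α)}`.
Both `α`-integrals are at most `K = 1 + α(α-1)ε` by hypothesis, and `K ≥ 1`, so
`∫ (dP/dQ)^{α/2} dQ ≤ K^{1/2} K^{1/2} = K`. -/

theorem ENNReal.mul_rpow_half_eq {a b : ℝ≥0∞} {α : ℝ} (hα : 1 ≤ α) :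
    (a * b) ^ (α / 2) = (b * a ^ α) ^ (1 / 2 : ℝ) * (b ^ (α - 1)) ^ (1 / 2 : ℝ) := by
  rw [ENNReal.mul_rpow_of_nonneg a b (by linarith), ENNReal.mul_rpow_of_nonneg b _ (by norm_num),
    ← ENNReal.rpow_mul, ← ENNReal.rpow_mul, mul_right_comm,
    ← ENNReal.rpow_add_of_nonneg _ _ (by norm_num) (by linarith)]
  ring_nf

namespace MeasureTheory

variable {X : Type*} [MeasurableSpace X]

/-- Without `μ ≪ ν` only the absolutely continuous part of `μ` is seen by `μ.rnDeriv ν`. -/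
theorem lintegral_rnDeriv_mul_le (μ ν : Measure X) {f : X → ℝ≥0∞} (hf : AEMeasurable f ν) :
    ∫⁻ x, μ.rnDeriv ν x * f x ∂ν ≤ ∫⁻ x, f x ∂μ :=
  calc ∫⁻ x, μ.rnDeriv ν x * f x ∂ν = ∫⁻ x, f x ∂(ν.withDensity (μ.rnDeriv ν)) :=
        (lintegral_withDensity_eq_lintegral_mul₀ (Measure.measurable_rnDeriv μ ν).aemeasurable
          hf).symm
    _ ≤ ∫⁻ x, f x ∂μ := lintegral_mono' (Measure.withDensity_rnDeriv_le μ ν) le_rfl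

theorem lintegral_rpow_le_rpow_lintegral_rpow {μ : Measure X} [IsProbabilityMeasure μ]
    {f : X → ℝ≥0∞} (hf : AEMeasurable f μ) {p q : ℝ} (hp : 0 ≤ p) (hpq : p ≤ q) :
    ∫⁻ x, f x ^ p ∂μ ≤ (∫⁻ x, f x ^ q ∂μ) ^ (p / q) := by
  rcases hp.eq_or_lt with rfl | hp
  · simp
  have hq : 0 < q := hp.trans_le hpq
  have hpq' : p / q ≤ 1 := (div_le_one hq).mpr hpq
  have holder := ENNReal.lintegral_mul_norm_pow_le (hf.pow_const q) (aemeasurable_const (b := 1))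
    (div_nonneg hp.le hq.le) (sub_nonneg.mpr hpq') (add_sub_cancel _ _)
  simp only [ENNReal.one_rpow, mul_one, lintegral_const, measure_univ] at holder
  simpa only [← ENNReal.rpow_mul, mul_div_cancel₀ p hq.ne'] using holder

/-- The triangle inequality for `I_β(P‖Q) = ∫ (dP/dQ)^β dQ`, at `β = α/2`. -/
theorem lintegral_rnDeriv_rpow_half_le {P Q R : Measure X} [SigmaFinite P] [SigmaFinite Q]
    [SigmaFinite R] (hPR : P ≪ R) {α : ℝ} (hα : 1 ≤ α) :
    ∫⁻ x, P.rnDeriv Q x ^ (α / 2) ∂Q ≤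
      (∫⁻ x, P.rnDeriv R x ^ α ∂ R) ^ (1 / 2 : ℝ) *
        (∫⁻ x, R.rnDeriv Q x ^ (α - 1) ∂Q) ^ (1 / 2 : ℝ) := by
  have hf : Measurable (P.rnDeriv R) := Measure.measurable_rnDeriv P R
  have hg : Measurable (R.rnDeriv Q) := Measure.measurable_rnDeriv R Q
  calc ∫⁻ x, P.rnDeriv Q x ^ (α / 2) ∂Q
      = ∫⁻ x, (R.rnDeriv Q x * P.rnDeriv R x ^ α) ^ (1 / 2 : ℝ) *
          (R.rnDeriv Q x ^ (α - 1)) ^ (1 / 2 : ℝ) ∂Q := by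
        refine lintegral_congr_ae ?_
        filter_upwards [Measure.rnDeriv_mul_rnDeriv hPR (κ := Q)] with x hx
        rw [← hx, Pi.mul_apply, ENNReal.mul_rpow_half_eq hα]
    _ ≤ (∫⁻ x, R.rnDeriv Q x * P.rnDeriv R x ^ α ∂Q) ^ (1 / 2 : ℝ) *
          (∫⁻ x, R.rnDeriv Q x ^ (α - 1) ∂Q) ^ (1 / 2 : ℝ) :=
        ENNReal.lintegral_mul_norm_pow_le (hg.mul (hf.pow_const α)).aemeasurable
          (hg.pow_const _).aemeasurable (by norm_num) (by norm_num) (by norm_num)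
    _ ≤ _ := by
        gcongr ?_ ^ _ * _
        exact lintegral_rnDeriv_mul_le R Q (hf.pow_const α).aemeasurable

end MeasureTheory

theorem group_privacy_step_ADP_general
    {X : Type*} [MeasureSpace X] (P Q R : Measure X)
    [IsProbabilityMeasure P] [IsProbabilityMeasure Q] [IsProbabilityMeasure R]
    (hPQ : P ≪ Q) (hQR : Q ≪ R)
    (α ε : ℝ) (hα : 2 < α)
    (hPR : ((∫⁻ x, (P.rnDeriv R x) ^ α ∂ R) - 1) / ENNReal.ofReal (α * (α - 1))
        ≤ ENNReal.ofReal ε)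
    (hRQ : ((∫⁻ x, (R.rnDeriv Q x) ^ α ∂Q) - 1) / ENNReal.ofReal (α * (α - 1))
        ≤ ENNReal.ofReal ε) :
    ((∫⁻ x, (P.rnDeriv Q x) ^ (α / 2) ∂Q) - 1)
        / ENNReal.ofReal ((α / 2) * (α / 2 - 1))
      ≤ ENNReal.ofReal ((α * (α - 1)) / ((α / 2) * (α / 2 - 1)) * ε) := by
  have hc : 0 < α * (α - 1) := by nlinarith
  have hc' : 0 < α / 2 * (α / 2 - 1) := by nlinarith
  set K := 1 + ENNReal.ofReal ε * ENNReal.ofReal (α * (α - 1))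
  have bound {I : ℝ≥0∞} (hI : (I - 1) / ENNReal.ofReal (α * (α - 1)) ≤ ENNReal.ofReal ε) :
      I ≤ K :=
    tsub_le_iff_left.mp ((ENNReal.div_le_iff (by simpa using hc) ENNReal.ofReal_ne_top).mp hI)
  have hexp : (α - 1) / α ≤ 1 := (div_le_one (by linarith)).mpr (by linarith)
  have hRQ' : ∫⁻ x, R.rnDeriv Q x ^ (α - 1) ∂Q ≤ K :=
    calc ∫⁻ x, R.rnDeriv Q x ^ (α - 1) ∂Q ≤ (∫⁻ x, R.rnDeriv Q x ^ α ∂Q) ^ ((α - 1) / α) :=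
          lintegral_rpow_le_rpow_lintegral_rpow (Measure.measurable_rnDeriv R Q).aemeasurable
            (by linarith) (by linarith)
      _ ≤ K ^ ((α - 1) / α) := ENNReal.rpow_le_rpow (bound hRQ) (by bound)
      _ ≤ K ^ (1 : ℝ) := ENNReal.rpow_le_rpow_of_exponent_le le_self_add hexp
      _ = K := ENNReal.rpow_one K
  have hPQ' : ∫⁻ x, P.rnDeriv Q x ^ (α / 2) ∂Q ≤ K :=
    calc _ ≤ _ := lintegral_rnDeriv_rpow_half_le (hPQ.trans hQR) (by linarith)
      _ ≤ K ^ (1 / 2 : ℝ) * K ^ (1 / 2 : ℝ) := by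
          gcongr
          exact bound hPR
      _ = K := by rw [← ENNReal.rpow_add_of_nonneg _ _ (by norm_num) (by norm_num)]; norm_num
  calc _ ≤ (K - 1) / ENNReal.ofReal (α / 2 * (α / 2 - 1)) := by gcongr
    _ = _ := by
        rw [ENNReal.add_sub_cancel_left ENNReal.one_ne_top, mul_comm, ← ENNReal.ofReal_mul hc.le,
          ← ENNReal.ofReal_div_of_pos hc', mul_div_right_comm]

/-- Group privacy step for ADP. Let `P = M(D₁)`, `R = M(D₂)`, `Q = M(D₃)` be the
output laws of a mechanism on datasets with `D₁ ~ D₂` and `D₂ ~ D₃` (so `D₁, D₃` differ in at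
most 2 entries), satisfying the absolute continuity chain `λ ≪ P ≪ Q ≪ R ≪ λ`. If the
mechanism satisfies `(α, ε)`-ADP on adjacent pairs, i.e. `D̃_α(P‖R) ≤ ε` and `D̃_α(R‖Q) ≤ ε`
with `α > 2`, then `D̃_{α/2}(P‖Q) ≤ (α(α−1)/((α/2)(α/2 − 1)))·ε`, where
`D̃_β(P‖Q) = (∫ (dP/dQ)^β dQ − 1)/(β(β−1))`. -/
theorem group_privacy_step_ADP
    {X : Type*} [MeasureSpace X] (P Q R : Measure X)
    [IsProbabilityMeasure P] [IsProbabilityMeasure Q] [IsProbabilityMeasure R]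
    (hlamP : (volume : Measure X) ≪ P) (hPQ : P ≪ Q) (hQR : Q ≪ R)
    (hRlam : R ≪ (volume : Measure X))
    (α ε : ℝ) (hα : 2 < α) (hε : 0 ≤ ε)
    (hPR : ((∫⁻ x, (P.rnDeriv R x) ^ α ∂ R) - 1) / ENNReal.ofReal (α * (α - 1))
        ≤ ENNReal.ofReal ε)
    (hRQ : ((∫⁻ x, (R.rnDeriv Q x) ^ α ∂Q) - 1) / ENNReal.ofReal (α * (α - 1))
        ≤ ENNReal.ofReal ε) :
    ((∫⁻ x, (P.rnDeriv Q x) ^ (α / 2) ∂Q) - 1)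
        / ENNReal.ofReal ((α / 2) * (α / 2 - 1))
      ≤ ENNReal.ofReal ((α * (α - 1)) / ((α / 2) * (α / 2 - 1)) * ε) :=
  group_privacy_step_ADP_general P Q R hPQ hQR α ε hα hPR hRQ
end

section
/- Conversion from ADP to approximate differential privacy: if a mechanism M satisfies (α, ε)-ADP, then for any δ ∈ (0,1) it satisfies (ε̄, δ)-differential privacy for any ε̄ ≥ log((e^ε·α(α−1) + 1)/δ) / (α−1). In particular, if E_P[(dP/dQ)^{α−1}] ≤ α(α−1)ε + 1 then P(dP/dQ > e^{ε̄}) ≤ (α(α−1)ε + 1)·e^{−ε̄(α−1)}. -/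
open MeasureTheory
open scoped ENNReal

/-! Write `f = dP/dQ`. Since `∫ f^α dQ = E_P[f^(α-1)]`, Markov's inequality bounds the tail
`P{f > e^ε̄}` by `(α(α-1)ε + 1) e^{-ε̄(α-1)}`, and the choice of `ε̄` (together with `ε ≤ e^ε`)
makes this at most `δ`. Off the tail `f ≤ e^ε̄`, so `P(S) ≤ e^ε̄ Q(S) + P{f > e^ε̄}`. -/

namespace MeasureTheory.Measure

variable {X : Type*} [MeasurableSpace X] {P Q : Measure X} [P.HaveLebesgueDecomposition Q]

lemma lintegral_rnDeriv_rpow (hPQ : P ≪ Q) {α : ℝ} (hα : 1 ≤ α) :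
    ∫⁻ x, P.rnDeriv Q x ^ α ∂Q = ∫⁻ x, P.rnDeriv Q x ^ (α - 1) ∂P := by
  rw [← lintegral_rnDeriv_mul hPQ ((measurable_rnDeriv P Q).pow_const _).aemeasurable]
  congr with x
  have := ENNReal.rpow_add_of_nonneg (x := P.rnDeriv Q x) 1 (α - 1) zero_le_one (by linarith)
  rwa [add_sub_cancel, ENNReal.rpow_one] at this

lemma rpow_mul_measure_lt_rnDeriv_le (hPQ : P ≪ Q) {α : ℝ} (hα : 1 ≤ α) (c : ℝ≥0∞) :
    c ^ (α - 1) * P {x | c < P.rnDeriv Q x} ≤ ∫⁻ x, P.rnDeriv Q x ^ α ∂Q := by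
  have hsub : {x | c < P.rnDeriv Q x} ⊆ {x | c ^ (α - 1) ≤ P.rnDeriv Q x ^ (α - 1)} :=
    fun x hx => ENNReal.rpow_le_rpow (le_of_lt hx) (by linarith)
  calc c ^ (α - 1) * P {x | c < P.rnDeriv Q x}
      ≤ c ^ (α - 1) * P {x | c ^ (α - 1) ≤ P.rnDeriv Q x ^ (α - 1)} := by gcongr
    _ ≤ ∫⁻ x, P.rnDeriv Q x ^ (α - 1) ∂P :=
      mul_meas_ge_le_lintegral₀ ((measurable_rnDeriv P Q).pow_const _).aemeasurable _
    _ = ∫⁻ x, P.rnDeriv Q x ^ α ∂Q := (lintegral_rnDeriv_rpow hPQ hα).symm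

lemma measure_le_mul_add_measure_lt_rnDeriv [SFinite Q] (hPQ : P ≪ Q) (c : ℝ≥0∞) {S : Set X}
    (hS : MeasurableSet S) : P S ≤ c * Q S + P {x | c < P.rnDeriv Q x} := by
  set A := {x | c < P.rnDeriv Q x}
  have hA : MeasurableSet A := measurableSet_lt measurable_const (measurable_rnDeriv P Q)
  have hbulk : P (S \ A) ≤ c * Q S :=
    calc P (S \ A) = ∫⁻ x in S \ A, P.rnDeriv Q x ∂Q := (setLIntegral_rnDeriv hPQ _).symm
      _ ≤ ∫⁻ _ in S \ A, c ∂Q := setLIntegral_mono' (hS.diff hA) fun x hx => not_lt.mp hx.2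
      _ ≤ c * Q S := by rw [setLIntegral_const]; gcongr; exact Set.sdiff_subset
  calc P S ≤ P (S ∩ A) + P (S \ A) := measure_le_inter_add_sdiff _ _ _
    _ ≤ P A + c * Q S := add_le_add (measure_mono Set.inter_subset_right) hbulk
    _ = c * Q S + P A := add_comm _ _

lemma measure_ofReal_exp_lt_rnDeriv_le (hPQ : P ≪ Q) {α K : ℝ} (hα : 1 ≤ α)
    (hK : ∫⁻ x, P.rnDeriv Q x ^ α ∂Q ≤ ENNReal.ofReal K) (t : ℝ) :
    P {x | ENNReal.ofReal (Real.exp t) < P.rnDeriv Q x}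
      ≤ ENNReal.ofReal (K * Real.exp (-(t * (α - 1)))) := by
  set s := t * (α - 1)
  have hpow : ENNReal.ofReal (Real.exp t) ^ (α - 1) = ENNReal.ofReal (Real.exp s) := by
    rw [ENNReal.ofReal_rpow_of_pos (Real.exp_pos _), ← Real.exp_mul]
  have hcancel : ENNReal.ofReal (Real.exp (-s)) * ENNReal.ofReal (Real.exp s) = 1 := by
    rw [← ENNReal.ofReal_mul (Real.exp_pos _).le, ← Real.exp_add, neg_add_cancel, Real.exp_zero,
      ENNReal.ofReal_one]
  calc P {x | ENNReal.ofReal (Real.exp t) < P.rnDeriv Q x}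
      = ENNReal.ofReal (Real.exp (-s)) *
          (ENNReal.ofReal (Real.exp s) * P {x | ENNReal.ofReal (Real.exp t) < P.rnDeriv Q x}) := by
        rw [← mul_assoc, hcancel, one_mul]
    _ ≤ ENNReal.ofReal (Real.exp (-s)) * ENNReal.ofReal K := by
        rw [← hpow]; gcongr; exact (rpow_mul_measure_lt_rnDeriv_le hPQ hα _).trans hK
    _ = ENNReal.ofReal (K * Real.exp (-s)) := by
        rw [mul_comm, ENNReal.ofReal_mul' (Real.exp_pos _).le]

end MeasureTheory.Measure

lemma mul_exp_neg_le_of_log_div_le {K M δ t : ℝ} (hKM : K ≤ M) (hM : 0 < M) (hδ : 0 < δ)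
    (ht : Real.log (M / δ) ≤ t) : K * Real.exp (-t) ≤ δ :=
  calc K * Real.exp (-t) ≤ M * Real.exp (-Real.log (M / δ)) := by gcongr
    _ = δ := by rw [Real.exp_neg, Real.exp_log (by positivity)]; field_simp

theorem ADP_to_approxDP_general
    {X : Type*} [MeasurableSpace X] (P Q : Measure X)
    [IsProbabilityMeasure P] [IsProbabilityMeasure Q]
    (hPQ : P ≪ Q)
    (α ε δ εbar : ℝ) (hα : 1 < α) (hδ : δ ∈ Set.Ioo (0 : ℝ) 1)
    (hADP : ∫⁻ x, (P.rnDeriv Q x) ^ α ∂Q ≤ ENNReal.ofReal (α * (α - 1) * ε + 1))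
    (hεbar : Real.log ((Real.exp ε * (α * (α - 1)) + 1) / δ) / (α - 1) ≤ εbar) :
    (∀ S : Set X, MeasurableSet S →
        P S ≤ ENNReal.ofReal (Real.exp εbar) * Q S + ENNReal.ofReal δ) ∧
      P {x | Real.exp εbar < (P.rnDeriv Q x).toReal}
        ≤ ENNReal.ofReal ((α * (α - 1) * ε + 1) * Real.exp (-(εbar * (α - 1)))) := by
  set A := {x | ENNReal.ofReal (Real.exp εbar) < P.rnDeriv Q x}
  have htail : P A ≤ ENNReal.ofReal ((α * (α - 1) * ε + 1) * Real.exp (-(εbar * (α - 1)))) :=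
    Measure.measure_ofReal_exp_lt_rnDeriv_le hPQ hα.le hADP εbar
  have hαα : 0 ≤ α * (α - 1) := by nlinarith
  have htail_le_δ : (α * (α - 1) * ε + 1) * Real.exp (-(εbar * (α - 1))) ≤ δ :=
    mul_exp_neg_le_of_log_div_le (by nlinarith [Real.add_one_le_exp ε])
      (by nlinarith [Real.exp_pos ε]) hδ.1 ((div_le_iff₀ (by linarith)).1 hεbar)
  refine ⟨fun S hS => ?_, (measure_mono fun x hx => ?_).trans htail⟩
  · calc P S ≤ ENNReal.ofReal (Real.exp εbar) * Q S + P A :=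
          Measure.measure_le_mul_add_measure_lt_rnDeriv hPQ _ hS
      _ ≤ _ := by gcongr; exact htail.trans (ENNReal.ofReal_le_ofReal htail_le_δ)
  · have hfinite : P.rnDeriv Q x ≠ ∞ :=
      (ENNReal.toReal_pos_iff.1 ((Real.exp_pos _).trans hx)).2.ne
    exact (ENNReal.ofReal_lt_iff_lt_toReal (Real.exp_pos _).le hfinite).2 hx

/-- Conversion from ADP to approximate differential privacy. Let `P ≪ Q` be the
output laws of an `(α, ε)`-ADP mechanism on adjacent datasets, i.e.
`∫ (dP/dQ)^α dQ = E_P[(dP/dQ)^{α−1}] ≤ α(α−1)ε + 1`. Then for any `δ ∈ (0,1)` and any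
`ε̄ ≥ log((e^ε·α(α−1) + 1)/δ)/(α−1)`, the mechanism is `(ε̄, δ)`-DP:
`P(S) ≤ e^{ε̄} Q(S) + δ` for all measurable `S`; in particular (Markov)
`P(dP/dQ > e^{ε̄}) ≤ (α(α−1)ε + 1)·e^{−ε̄(α−1)}`. -/
theorem ADP_to_approxDP
    {X : Type*} [MeasurableSpace X] (P Q : Measure X)
    [IsProbabilityMeasure P] [IsProbabilityMeasure Q]
    (hPQ : P ≪ Q)
    (α ε δ εbar : ℝ) (hα : 1 < α) (hε : 0 ≤ ε) (hδ : δ ∈ Set.Ioo (0 : ℝ) 1)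
    (hADP : ∫⁻ x, (P.rnDeriv Q x) ^ α ∂Q ≤ ENNReal.ofReal (α * (α - 1) * ε + 1))
    (hεbar : Real.log ((Real.exp ε * (α * (α - 1)) + 1) / δ) / (α - 1) ≤ εbar) :
    (∀ S : Set X, MeasurableSet S →
        P S ≤ ENNReal.ofReal (Real.exp εbar) * Q S + ENNReal.ofReal δ) ∧
      P {x | Real.exp εbar < (P.rnDeriv Q x).toReal}
        ≤ ENNReal.ofReal ((α * (α - 1) * ε + 1) * Real.exp (-(εbar * (α - 1)))) :=
  ADP_to_approxDP_general P Q hPQ α ε δ εbar hα hδ hADP hεbar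
end

section
/- Closed form of the alpha divergence between shifted Laplace distributions: for μ > 0, b > 0, α > 1, the alpha divergence between Lap(0, b) and Lap(μ, b) equals exp((α−1)μ/b)/((α−1)(2α−1)) + exp(−αμ/b)/(α(2α−1)) − 1/(α(α−1)). -/
/-!
On the three intervals cut out by `0` and `μ`, the exponent of
`p ^ α * q ^ (1 - α) = (2b)⁻¹ exp (-(α|x| + (1 - α)|x - μ|) / b)` is affine with slopes
`1/b`, `(1 - 2α)/b` and `-1/b`, so the integral is a sum of three elementary exponential
integrals; `α ≠ 1/2` keeps the middle slope nonzero.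
-/

open MeasureTheory Real Set

theorem integral_eq_integral_Iic_add_intervalIntegral_add_integral_Ioi {E : Type*}
    [NormedAddCommGroup E] [NormedSpace ℝ E] {ν : Measure ℝ} {f : ℝ → E} {a c : ℝ}
    (hac : a ≤ c) (hIic : IntegrableOn f (Iic a) ν) (hIcc : IntervalIntegrable f ν a c)
    (hIoi : IntegrableOn f (Ioi c) ν) :
    ∫ x, f x ∂ν = (∫ x in Iic a, f x ∂ν) + (∫ x in a..c, f x ∂ν) + ∫ x in Ioi c, f x ∂ν := by
  have hIoi' : IntegrableOn f (Ioi a) ν := by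
    rw [← Ioc_union_Ioi_eq_Ioi hac]
    exact ((intervalIntegrable_iff_integrableOn_Ioc_of_le hac).1 hIcc).union hIoi
  rw [add_assoc, intervalIntegral.integral_interval_add_Ioi' hIcc hIoi,
    intervalIntegral.integral_Iic_add_Ioi hIic hIoi']

theorem integral_exp_mul {a b k : ℝ} (hk : k ≠ 0) :
    ∫ x in a..b, exp (k * x) = (exp (k * b) - exp (k * a)) / k := by
  rw [intervalIntegral.integral_comp_mul_left (fun x => exp x) hk, integral_exp, smul_eq_mul,
    inv_mul_eq_div]

theorem mul_exp_rpow_mul_mul_exp_rpow {c : ℝ} (hc : 0 < c) (u v α : ℝ) :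
    (c * exp u) ^ α * (c * exp v) ^ (1 - α) = c * exp (α * u + (1 - α) * v) := by
  rw [mul_rpow hc.le (exp_pos _).le, mul_rpow hc.le (exp_pos _).le, ← exp_mul, ← exp_mul,
    mul_mul_mul_comm, ← rpow_add hc, add_sub_cancel, rpow_one, ← exp_add]
  ring_nf

section WeightedAbs

variable {b μ α : ℝ}

theorem eqOn_exp_neg_weighted_abs_Iic (hμ : 0 ≤ μ) :
    EqOn (fun x => exp (-(α * |x| + (1 - α) * |x - μ|) / b))
      (fun x => exp ((α - 1) * μ / b) * exp (b⁻¹ * x)) (Iic 0) := fun x (hx : x ≤ 0) => by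
  dsimp only
  rw [abs_of_nonpos hx, abs_of_nonpos (by linarith), ← exp_add]
  ring_nf

theorem eqOn_exp_neg_weighted_abs_uIcc (hμ : 0 ≤ μ) :
    EqOn (fun x => exp (-(α * |x| + (1 - α) * |x - μ|) / b))
      (fun x => exp ((α - 1) * μ / b) * exp ((1 - 2 * α) / b * x)) (uIcc 0 μ) := by
  rw [uIcc_of_le hμ]
  rintro x ⟨hx₀, hxμ⟩
  dsimp only
  rw [abs_of_nonneg hx₀, abs_of_nonpos (by linarith), ← exp_add]
  ring_nf

theorem eqOn_exp_neg_weighted_abs_Ioi (hμ : 0 ≤ μ) :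
    EqOn (fun x => exp (-(α * |x| + (1 - α) * |x - μ|) / b))
      (fun x => exp ((1 - α) * μ / b) * exp (-b⁻¹ * x)) (Ioi μ) := fun x (hx : μ < x) => by
  dsimp only
  rw [abs_of_nonneg (by linarith), abs_of_nonneg (by linarith), ← exp_add]
  ring_nf

theorem integral_exp_neg_weighted_abs (hb : 0 < b) (hμ : 0 ≤ μ) (hα : 2 * α - 1 ≠ 0) :
    ∫ x, exp (-(α * |x| + (1 - α) * |x - μ|) / b)
      = b * (2 * α * exp ((α - 1) * μ / b) + 2 * (α - 1) * exp (-(α * μ) / b)) / (2 * α - 1) := by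
  have hb0 : b ≠ 0 := hb.ne'
  have hb' : 0 < b⁻¹ := inv_pos.2 hb
  have h12 : 1 - 2 * α ≠ 0 := by contrapose! hα; linarith
  have hslope : (1 - 2 * α) / b ≠ 0 := div_ne_zero h12 hb0
  have hIic := eqOn_exp_neg_weighted_abs_Iic (α := α) (b := b) hμ
  have hIcc := eqOn_exp_neg_weighted_abs_uIcc (α := α) (b := b) hμ
  have hIoi := eqOn_exp_neg_weighted_abs_Ioi (α := α) (b := b) hμ
  have hleft : ∫ x in Iic 0, exp (-(α * |x| + (1 - α) * |x - μ|) / b)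
      = b * exp ((α - 1) * μ / b) := by
    rw [setIntegral_congr_fun measurableSet_Iic hIic, integral_const_mul,
      integral_exp_mul_Iic hb', mul_zero, exp_zero, div_inv_eq_mul, one_mul, mul_comm]
  have hmid : ∫ x in (0)..μ, exp (-(α * |x| + (1 - α) * |x - μ|) / b)
      = b * (exp ((α - 1) * μ / b) - exp (-(α * μ) / b)) / (2 * α - 1) := by
    rw [intervalIntegral.integral_congr hIcc, intervalIntegral.integral_const_mul,
      integral_exp_mul hslope, mul_zero, exp_zero, mul_div_assoc', mul_sub, mul_one, ← exp_add,
      show (α - 1) * μ / b + (1 - 2 * α) / b * μ = -(α * μ) / b by ring,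
      div_eq_div_iff hslope hα]
    field_simp
    ring
  have hright : ∫ x in Ioi μ, exp (-(α * |x| + (1 - α) * |x - μ|) / b)
      = b * exp (-(α * μ) / b) := by
    rw [setIntegral_congr_fun measurableSet_Ioi hIoi, integral_const_mul,
      integral_exp_mul_Ioi (neg_neg_of_pos hb'), mul_div_assoc', mul_neg, ← exp_add,
      show (1 - α) * μ / b + -b⁻¹ * μ = -(α * μ) / b by ring, neg_div_neg_eq, div_inv_eq_mul,
      mul_comm]
  rw [integral_eq_integral_Iic_add_intervalIntegral_add_integral_Ioi hμ
      (IntegrableOn.congr_fun ((integrableOn_exp_mul_Iic hb' 0).const_mul _) hIic.symm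
        measurableSet_Iic)
      ((by fun_prop : Continuous _).intervalIntegrable 0 μ)
      (IntegrableOn.congr_fun ((integrableOn_exp_mul_Ioi (neg_neg_of_pos hb') μ).const_mul _)
        hIoi.symm measurableSet_Ioi), hleft, hmid, hright, eq_div_iff hα, add_mul, add_mul,
    div_mul_cancel₀ _ hα]
  ring

end WeightedAbs

noncomputable def laplacePDF (m b x : ℝ) : ℝ := 1 / (2 * b) * exp (-|x - m| / b)

theorem laplacePDF_rpow_mul_laplacePDF_rpow {b : ℝ} (hb : 0 < b) (m m' α x : ℝ) :
    laplacePDF m b x ^ α * laplacePDF m' b x ^ (1 - α)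
      = 1 / (2 * b) * exp (-(α * |x - m| + (1 - α) * |x - m'|) / b) := by
  rw [laplacePDF, laplacePDF, mul_exp_rpow_mul_mul_exp_rpow (by positivity)]
  ring_nf

theorem integral_laplacePDF_rpow_mul_laplacePDF_rpow {b μ α : ℝ} (hb : 0 < b) (hμ : 0 ≤ μ)
    (hα : 2 * α - 1 ≠ 0) :
    ∫ x, laplacePDF 0 b x ^ α * laplacePDF μ b x ^ (1 - α)
      = (α * exp ((α - 1) * μ / b) + (α - 1) * exp (-(α * μ) / b)) / (2 * α - 1) := by
  simp_rw [laplacePDF_rpow_mul_laplacePDF_rpow hb, sub_zero]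
  rw [integral_const_mul, integral_exp_neg_weighted_abs hb hμ hα]
  field_simp

/-- Closed form of the alpha divergence between shifted Laplace distributions.
With `p` the density of `Lap(0,b)` and `q` the density of `Lap(μ,b)` (`μ > 0`, `b > 0`), and
`α > 1`, the alpha divergence `(1/(α(α−1)))(∫ p^α q^{1−α} dx − 1)` equals
`exp((α−1)μ/b)/((α−1)(2α−1)) + exp(−αμ/b)/(α(2α−1)) − 1/(α(α−1))`. -/
theorem laplace_alphaDivergence (b μ α : ℝ) (hb : 0 < b) (hμ : 0 < μ) (hα : 1 < α) :
    (1 / (α * (α - 1))) *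
        ((∫ x : ℝ, ((1 / (2 * b)) * Real.exp (-|x - 0| / b)) ^ α
            * ((1 / (2 * b)) * Real.exp (-|x - μ| / b)) ^ (1 - α)) - 1)
      = Real.exp ((α - 1) * μ / b) / ((α - 1) * (2 * α - 1))
        + Real.exp (-(α * μ) / b) / (α * (2 * α - 1))
        - 1 / (α * (α - 1)) := by
  have h2α : 2 * α - 1 ≠ 0 := by linarith
  have hα0 : α ≠ 0 := by linarith
  have hα1 : α - 1 ≠ 0 := by linarith
  have key := integral_laplacePDF_rpow_mul_laplacePDF_rpow hb hμ.le h2α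
  simp only [laplacePDF] at key
  rw [key]
  field_simp
end

section
/- Non-adaptive n-fold composition bound for ADP: if mechanisms M₁, …, Mₙ each satisfy (α, ε)-ADP and satisfy ∫ (dPᵢ/dQᵢ)^α dQᵢ ≤ α(α−1)ε + 1 for their respective output pairs, then the product mechanism (M₁, …, Mₙ) satisfies ∫ (dP/dQ)^α dQ ≤ (α(α−1)ε + 1)^n for the product measures, i.e., it is (α, ((α(α−1)ε + 1)^n − 1)/(α(α−1)))-ADP. -/
open MeasureTheory
open scoped ENNReal

lemma aux_lintegral_pi_prod {n : ℕ} {X : Fin n → Type*} [∀ i, MeasurableSpace (X i)]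
    (μ : ∀ i, Measure (X i)) [∀ i, SigmaFinite (μ i)]
    (f : ∀ i, X i → ℝ≥0∞) (hf : ∀ i, Measurable (f i)) :
    ∫⁻ x, ∏ i, f i (x i) ∂(Measure.pi μ) = ∏ i, ∫⁻ x, f i x ∂(μ i) := by
  induction n with
  | zero => simp [lintegral_const, Measure.pi_univ]
  | succ m ih =>
    have mp := measurePreserving_piFinSuccAbove μ 0
    have hmeas : Measurable (fun y : X 0 × (∀ j : Fin m, X ((0 : Fin (m+1)).succAbove j)) =>
        f 0 y.1 * ∏ j, f ((0 : Fin (m+1)).succAbove j) (y.2 j)) := by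
      exact ((hf 0).comp measurable_fst).mul
        (Finset.measurable_prod _ fun j _ =>
          ((hf _).comp ((measurable_pi_apply j).comp measurable_snd)))
    calc ∫⁻ x, ∏ i, f i (x i) ∂(Measure.pi μ)
        = ∫⁻ x, f 0 (x 0) * ∏ j : Fin m, f ((0 : Fin (m+1)).succAbove j)
            (x ((0 : Fin (m+1)).succAbove j)) ∂(Measure.pi μ) := by
          congr 1 with x
          rw [Fin.prod_univ_succAbove (fun i => f i (x i)) 0]
      _ = ∫⁻ y, f 0 y.1 * ∏ j, f ((0 : Fin (m+1)).succAbove j) (y.2 j)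
            ∂((μ 0).prod (Measure.pi fun j => μ ((0 : Fin (m+1)).succAbove j))) := by
          rw [← mp.lintegral_comp hmeas]; rfl
      _ = (∫⁻ x, f 0 x ∂(μ 0)) * ∫⁻ b, ∏ j, f ((0 : Fin (m+1)).succAbove j) (b j)
            ∂(Measure.pi fun j => μ ((0 : Fin (m+1)).succAbove j)) :=
          lintegral_prod_mul ((hf 0).aemeasurable)
            ((Finset.measurable_prod _ fun j _ =>
              (hf _).comp (measurable_pi_apply j)).aemeasurable)
      _ = (∫⁻ x, f 0 x ∂(μ 0)) * ∏ j, ∫⁻ x, f ((0 : Fin (m+1)).succAbove j) x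
            ∂(μ ((0 : Fin (m+1)).succAbove j)) := by
          rw [ih (fun j => μ ((0 : Fin (m+1)).succAbove j)) _ (fun j => hf _)]
      _ = ∏ i, ∫⁻ x, f i x ∂(μ i) := by
          rw [Fin.prod_univ_succAbove (fun i => ∫⁻ x, f i x ∂(μ i)) 0]

lemma aux_pi_withDensity {n : ℕ} {X : Fin n → Type*} [∀ i, MeasurableSpace (X i)]
    (P Q : ∀ i, Measure (X i)) [∀ i, IsProbabilityMeasure (P i)] [∀ i, IsProbabilityMeasure (Q i)]
    (hac : ∀ i, P i ≪ Q i) :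
    Measure.pi P = (Measure.pi Q).withDensity (fun x => ∏ i, (P i).rnDeriv (Q i) (x i)) := by
  have hf : ∀ i, Measurable ((P i).rnDeriv (Q i)) := fun i => Measure.measurable_rnDeriv _ _
  refine Measure.pi_eq fun s hs => ?_
  rw [withDensity_apply _ (MeasurableSet.univ_pi hs)]
  have : ∫⁻ x in Set.pi Set.univ s, ∏ i, (P i).rnDeriv (Q i) (x i) ∂(Measure.pi Q)
      = ∫⁻ x, ∏ i, (s i).indicator ((P i).rnDeriv (Q i)) (x i) ∂(Measure.pi Q) := by
    rw [← lintegral_indicator (MeasurableSet.univ_pi hs) _]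
    congr 1 with x
    by_cases hx : x ∈ Set.pi Set.univ s
    · rw [Set.indicator_of_mem hx]
      exact Finset.prod_congr rfl fun i _ =>
        (Set.indicator_of_mem (hx i (Set.mem_univ i)) _).symm
    · rw [Set.indicator_of_notMem hx]
      simp only [Set.mem_pi, Set.mem_univ, forall_true_left, not_forall] at hx
      obtain ⟨i, hi⟩ := hx
      exact (Finset.prod_eq_zero (Finset.mem_univ i)
        (Set.indicator_of_notMem hi _)).symm
  rw [this, aux_lintegral_pi_prod Q _ (fun i => (hf i).indicator (hs i))]
  refine Finset.prod_congr rfl fun i _ => ?_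
  rw [lintegral_indicator (hs i) _, Measure.setLIntegral_rnDeriv (hac i)]

/-- Non-adaptive n-fold composition bound for ADP. If for each `i` the
output laws `Pᵢ ≪ Qᵢ` of mechanism `Mᵢ` satisfy `∫ (dPᵢ/dQᵢ)^α dQᵢ ≤ α(α−1)ε + 1`, then the
product mechanism satisfies `∫ (dP/dQ)^α dQ ≤ (α(α−1)ε + 1)^n` for the product measures
`P = Π Pᵢ`, `Q = Π Qᵢ`, i.e. it is `(α, ((α(α−1)ε + 1)^n − 1)/(α(α−1)))`-ADP, where
`D̃_α(P‖Q) = (∫ (dP/dQ)^α dQ − 1)/(α(α−1))`. -/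
theorem nonadaptive_composition_ADP
    {n : ℕ} {X : Fin n → Type*} [∀ i, MeasurableSpace (X i)]
    (P Q : ∀ i, Measure (X i))
    [∀ i, IsProbabilityMeasure (P i)] [∀ i, IsProbabilityMeasure (Q i)]
    (α ε : ℝ) (hα : 1 < α) (hε : 0 ≤ ε)
    (hac : ∀ i, P i ≪ Q i)
    (h : ∀ i, ∫⁻ x, ((P i).rnDeriv (Q i) x) ^ α ∂(Q i)
        ≤ ENNReal.ofReal (α * (α - 1) * ε + 1)) :
    (∫⁻ x, ((Measure.pi P).rnDeriv (Measure.pi Q) x) ^ α ∂(Measure.pi Q)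
        ≤ ENNReal.ofReal ((α * (α - 1) * ε + 1) ^ n)) ∧
      ((∫⁻ x, ((Measure.pi P).rnDeriv (Measure.pi Q) x) ^ α ∂(Measure.pi Q)) - 1)
          / ENNReal.ofReal (α * (α - 1))
        ≤ ENNReal.ofReal (((α * (α - 1) * ε + 1) ^ n - 1) / (α * (α - 1))) := by
  set K : ℝ := α * (α - 1) * ε + 1 with hKdef
  have hα0 : 0 ≤ α := le_of_lt (lt_trans one_pos hα)
  have hK1 : 1 ≤ K := by
    rw [hKdef]
    nlinarith [mul_nonneg (mul_nonneg hα0 (by linarith : (0:ℝ) ≤ α - 1)) hε]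
  have hK0 : 0 ≤ K := le_trans zero_le_one hK1
  have hf : ∀ i, Measurable ((P i).rnDeriv (Q i)) := fun i => Measure.measurable_rnDeriv _ _
  set g : (∀ i, X i) → ℝ≥0∞ := fun x => ∏ i, (P i).rnDeriv (Q i) (x i) with hgdef
  have hg : Measurable g := Finset.measurable_prod _ fun i _ =>
    (hf i).comp (measurable_pi_apply i)
  have heq : (Measure.pi P).rnDeriv (Measure.pi Q) =ᵐ[Measure.pi Q] g := by
    rw [aux_pi_withDensity P Q hac]
    exact Measure.rnDeriv_withDensity _ hg
  have hA : ∫⁻ x, ((Measure.pi P).rnDeriv (Measure.pi Q) x) ^ α ∂(Measure.pi Q)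
      = ∏ i, ∫⁻ x, ((P i).rnDeriv (Q i) x) ^ α ∂(Q i) := by
    rw [lintegral_congr_ae (heq.mono fun x hx => by rw [hx])]
    calc ∫⁻ x, g x ^ α ∂(Measure.pi Q)
        = ∫⁻ x, ∏ i, ((P i).rnDeriv (Q i) (x i)) ^ α ∂(Measure.pi Q) := by
          congr 1 with x
          rw [hgdef]
          exact (ENNReal.prod_rpow_of_nonneg hα0).symm
      _ = ∏ i, ∫⁻ x, ((P i).rnDeriv (Q i) x) ^ α ∂(Q i) :=
          aux_lintegral_pi_prod Q _ (fun i => (hf i).pow_const α)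
  have hbound : ∫⁻ x, ((Measure.pi P).rnDeriv (Measure.pi Q) x) ^ α ∂(Measure.pi Q)
      ≤ ENNReal.ofReal (K ^ n) := by
    rw [hA, ENNReal.ofReal_pow hK0]
    calc ∏ i, ∫⁻ x, ((P i).rnDeriv (Q i) x) ^ α ∂(Q i)
        ≤ ∏ _i : Fin n, ENNReal.ofReal K := Finset.prod_le_prod' fun i _ => h i
      _ = ENNReal.ofReal K ^ n := by simp [Finset.prod_const]
  refine ⟨hbound, ?_⟩
  have hsub : ∫⁻ x, ((Measure.pi P).rnDeriv (Measure.pi Q) x) ^ α ∂(Measure.pi Q) - 1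
      ≤ ENNReal.ofReal (K ^ n - 1) := by
    rw [ENNReal.ofReal_sub _ zero_le_one, ENNReal.ofReal_one]
    exact tsub_le_tsub_right hbound 1
  have hpos : 0 < α * (α - 1) := by nlinarith
  rw [ENNReal.ofReal_div_of_pos hpos]
  exact ENNReal.div_le_div_right hsub _
end
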